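/- arXiv:1207.2874 — 2 statements merged into one kernel-verified Lean document; each statement's English description precedes it below -/
import Mathlib

section
/- Let a and b be linear operators on ℂ² satisfying ab + ba = 1, a² = 0, b² = 0, let φ₀ satisfy aφ₀ = 0 and Ψ₀ satisfy b*Ψ₀ = 0 with the normalization ⟨φ₀, Ψ₀⟩ = 1, and set φ₁ := bφ₀, Ψ₁ := a*Ψ₀. Then the families {φ₀, φ₁} and {Ψ₀, Ψ₁} are biorthonormal: ⟨φₖ, Ψₙ⟩ = δₖₙ for k, n ∈ {0, 1}. -/
open Matrix
open scoped InnerProductSpace ComplexOrder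

noncomputable section

/-- Action of a 2×2 complex matrix (an operator) on a vector of ℂ². -/
def act (A : Matrix (Fin 2) (Fin 2) ℂ) (x : EuclideanSpace ℂ (Fin 2)) :
    EuclideanSpace ℂ (Fin 2) := WithLp.toLp 2 (A.mulVec x)

/-! Through the star-algebra isomorphism `toEuclideanCLM` the claim is one about operators on a
Hilbert space, where the adjoint moves `a` and `b` across the inner product:
`⟨φ₀, a*Ψ₀⟩ = ⟨aφ₀, Ψ₀⟩ = 0`, `⟨bφ₀, Ψ₀⟩ = ⟨φ₀, b*Ψ₀⟩ = 0` and `⟨bφ₀, a*Ψ₀⟩ = ⟨abφ₀, Ψ₀⟩`;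
the anticommutation rule gives `abφ₀ = φ₀ - baφ₀ = φ₀`. -/

namespace ContinuousLinearMap

open scoped InnerProduct

variable {𝕜 H : Type*} [RCLike 𝕜] [NormedAddCommGroup H] [InnerProductSpace 𝕜 H]

lemma apply_apply_eq_self_of_anticomm {a b : H →L[𝕜] H} (hab : a * b + b * a = 1) {φ : H}
    (hφ : a φ = 0) : a (b φ) = φ := by
  simpa [hφ] using congrArg (· φ) hab

variable [CompleteSpace H]

lemma inner_apply_adjoint_apply_of_anticomm {a b : H →L[𝕜] H} (hab : a * b + b * a = 1)
    {φ : H} (hφ : a φ = 0) (Ψ : H) : ⟪b φ, (a†) Ψ⟫_𝕜 = ⟪φ, Ψ⟫_𝕜 := by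
  rw [adjoint_inner_right, apply_apply_eq_self_of_anticomm hab hφ]

theorem inner_biorthonormal_of_anticomm {a b : H →L[𝕜] H} (hab : a * b + b * a = 1)
    {φ₀ Ψ₀ : H} (hφ : a φ₀ = 0) (hΨ : (b†) Ψ₀ = 0) (hnorm : ⟪φ₀, Ψ₀⟫_𝕜 = 1) :
    ⟪φ₀, Ψ₀⟫_𝕜 = 1 ∧ ⟪φ₀, (a†) Ψ₀⟫_𝕜 = 0 ∧ ⟪b φ₀, Ψ₀⟫_𝕜 = 0 ∧ ⟪b φ₀, (a†) Ψ₀⟫_𝕜 = 1 := by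
  refine ⟨hnorm, ?_, ?_, ?_⟩
  · rw [adjoint_inner_right, hφ, inner_zero_left]
  · rw [← adjoint_inner_right, hΨ, inner_zero_right]
  · rw [inner_apply_adjoint_apply_of_anticomm hab hφ, hnorm]

end ContinuousLinearMap

lemma act_eq_toEuclideanCLM (A : Matrix (Fin 2) (Fin 2) ℂ) (x : EuclideanSpace ℂ (Fin 2)) :
    act A x = toEuclideanCLM (𝕜 := ℂ) (n := Fin 2) A x :=
  rfl

theorem stmt3_general (a b : Matrix (Fin 2) (Fin 2) ℂ)
    (hab : a * b + b * a = 1)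
    (φ₀ Ψ₀ : EuclideanSpace ℂ (Fin 2))
    (hvacφ : act a φ₀ = 0) (hvacΨ : act bᴴ Ψ₀ = 0)
    (hnorm : ⟪φ₀, Ψ₀⟫_ℂ = 1) :
    ⟪φ₀, Ψ₀⟫_ℂ = 1 ∧ ⟪φ₀, act aᴴ Ψ₀⟫_ℂ = 0 ∧
    ⟪act b φ₀, Ψ₀⟫_ℂ = 0 ∧ ⟪act b φ₀, act aᴴ Ψ₀⟫_ℂ = 1 := by
  have hab' := congrArg (toEuclideanCLM (𝕜 := ℂ) (n := Fin 2)) hab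
  simp only [map_add, map_mul, map_one] at hab'
  simp only [act_eq_toEuclideanCLM, ← star_eq_conjTranspose, map_star,
    ContinuousLinearMap.star_eq_adjoint] at hvacφ hvacΨ ⊢
  exact ContinuousLinearMap.inner_biorthonormal_of_anticomm hab' hvacφ hvacΨ hnorm

/-- With the normalization `⟨φ₀, Ψ₀⟩ = 1`, the families `{φ₀, φ₁}` and
`{Ψ₀, Ψ₁}` are biorthonormal: `⟨φₖ, Ψₙ⟩ = δₖₙ`. -/
theorem stmt3 (a b : Matrix (Fin 2) (Fin 2) ℂ)
    (hab : a * b + b * a = 1) (ha2 : a * a = 0) (hb2 : b * b = 0)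
    (φ₀ Ψ₀ : EuclideanSpace ℂ (Fin 2))
    (hvacφ : act a φ₀ = 0) (hvacΨ : act bᴴ Ψ₀ = 0)
    (hnorm : ⟪φ₀, Ψ₀⟫_ℂ = 1) :
    ⟪φ₀, Ψ₀⟫_ℂ = 1 ∧ ⟪φ₀, act aᴴ Ψ₀⟫_ℂ = 0 ∧
    ⟪act b φ₀, Ψ₀⟫_ℂ = 0 ∧ ⟪act b φ₀, act aᴴ Ψ₀⟫_ℂ = 1 :=
  stmt3_general a b hab φ₀ Ψ₀ hvacφ hvacΨ hnorm
end
end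

section
/- Let a and b be linear operators on ℂ² satisfying ab + ba = 1, a² = 0, b² = 0, let φ₀ satisfy aφ₀ = 0 and Ψ₀ satisfy b*Ψ₀ = 0 with ⟨φ₀, Ψ₀⟩ = 1, set φ₁ := bφ₀, Ψ₁ := a*Ψ₀, and define S_φ f := ⟨φ₀,f⟩φ₀ + ⟨φ₁,f⟩φ₁ and S_Ψ f := ⟨Ψ₀,f⟩Ψ₀ + ⟨Ψ₁,f⟩Ψ₁. Then S_φ Ψₙ = φₙ and S_Ψ φₙ = Ψₙ for n = 0, 1. -/
/-! The two families are biorthogonal, `⟪φᵢ, Ψⱼ⟫ = δᵢⱼ`: `aφ₀ = 0` and `b*Ψ₀ = 0` give the off-diagonal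
zeros, and `ab + ba = 1` gives `abφ₀ = φ₀`, hence `⟪φ₁, Ψ₁⟫ = ⟪abφ₀, Ψ₀⟫ = ⟪φ₀, Ψ₀⟫ = 1`.
For a biorthogonal pair of families, `f ↦ Σ ⟪uᵢ, f⟫ uᵢ` sends each `vⱼ` to `uⱼ`. -/

open Matrix
open scoped InnerProductSpace ComplexOrder

noncomputable section

section Biorthogonal

variable {𝕜 E : Type*} [RCLike 𝕜] [NormedAddCommGroup E] [InnerProductSpace 𝕜 E]

theorem inner_eq_one_symm {x y : E} (h : ⟪x, y⟫_𝕜 = 1) : ⟪y, x⟫_𝕜 = 1 := by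
  rw [← inner_conj_symm, h, map_one]

theorem inner_smul_add_inner_smul_eq_of_biorthogonal {u₀ u₁ v₀ v₁ : E}
    (h₀₀ : ⟪u₀, v₀⟫_𝕜 = 1) (h₀₁ : ⟪u₀, v₁⟫_𝕜 = 0) (h₁₀ : ⟪u₁, v₀⟫_𝕜 = 0) (h₁₁ : ⟪u₁, v₁⟫_𝕜 = 1) :
    ⟪u₀, v₀⟫_𝕜 • u₀ + ⟪u₁, v₀⟫_𝕜 • u₁ = u₀ ∧ ⟪u₀, v₁⟫_𝕜 • u₀ + ⟪u₁, v₁⟫_𝕜 • u₁ = u₁ := by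
  rw [h₀₀, h₀₁, h₁₀, h₁₁]
  simp only [one_smul, zero_smul, add_zero, zero_add, and_self]

end Biorthogonal

section Act

variable (A B : Matrix (Fin 2) (Fin 2) ℂ) (x y : EuclideanSpace ℂ (Fin 2))

theorem inner_act_left : ⟪act A x, y⟫_ℂ = ⟪x, act Aᴴ y⟫_ℂ := by
  simp only [act, EuclideanSpace.inner_eq_star_dotProduct, star_mulVec]
  rw [dotProduct_comm, ← dotProduct_mulVec, dotProduct_comm]

theorem act_mul : act (A * B) x = act A (act B x) := by
  simp only [act, WithLp.ofLp_toLp, mulVec_mulVec]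

theorem act_sub : act (A - B) x = act A x - act B x := by
  simp only [act, sub_mulVec, WithLp.toLp_sub]

theorem act_one : act 1 x = x := by
  simp only [act, one_mulVec, WithLp.toLp_ofLp]

theorem act_zero : act A 0 = 0 := by
  simp only [act, WithLp.ofLp_zero, mulVec_zero, WithLp.toLp_zero]

end Act

section PseudoFermion

variable {a b : Matrix (Fin 2) (Fin 2) ℂ} {φ ψ : EuclideanSpace ℂ (Fin 2)}

theorem inner_act_conjTranspose_eq_zero (hφ : act a φ = 0) : ⟪φ, act aᴴ ψ⟫_ℂ = 0 := by
  rw [← inner_act_left, hφ, inner_zero_left]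

theorem inner_act_eq_zero (hψ : act bᴴ ψ = 0) : ⟪act b φ, ψ⟫_ℂ = 0 := by
  rw [inner_act_left, hψ, inner_zero_right]

theorem act_act_of_anticomm (hab : a * b + b * a = 1) (hφ : act a φ = 0) :
    act a (act b φ) = φ := by
  rw [← act_mul, eq_sub_of_add_eq hab, act_sub, act_mul, hφ, act_zero, act_one, sub_zero]

theorem inner_act_act_conjTranspose_of_anticomm (hab : a * b + b * a = 1) (hφ : act a φ = 0) :
    ⟪act b φ, act aᴴ ψ⟫_ℂ = ⟪φ, ψ⟫_ℂ := by
  rw [← inner_act_left, act_act_of_anticomm hab hφ]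

end PseudoFermion

theorem stmt6_general (a b Sφ SΨ : Matrix (Fin 2) (Fin 2) ℂ)
    (hab : a * b + b * a = 1)
    (φ₀ Ψ₀ : EuclideanSpace ℂ (Fin 2))
    (hvacφ : act a φ₀ = 0) (hvacΨ : act bᴴ Ψ₀ = 0)
    (hnorm : ⟪φ₀, Ψ₀⟫_ℂ = 1)
    (hSφ : ∀ f, act Sφ f = ⟪φ₀, f⟫_ℂ • φ₀ + ⟪act b φ₀, f⟫_ℂ • act b φ₀)
    (hSΨ : ∀ f, act SΨ f = ⟪Ψ₀, f⟫_ℂ • Ψ₀ + ⟪act aᴴ Ψ₀, f⟫_ℂ • act aᴴ Ψ₀) :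
    act Sφ Ψ₀ = φ₀ ∧ act Sφ (act aᴴ Ψ₀) = act b φ₀ ∧
    act SΨ φ₀ = Ψ₀ ∧ act SΨ (act b φ₀) = act aᴴ Ψ₀ := by
  have h₀₁ : ⟪φ₀, act aᴴ Ψ₀⟫_ℂ = 0 := inner_act_conjTranspose_eq_zero hvacφ
  have h₁₀ : ⟪act b φ₀, Ψ₀⟫_ℂ = 0 := inner_act_eq_zero hvacΨ
  have h₁₁ : ⟪act b φ₀, act aᴴ Ψ₀⟫_ℂ = 1 := by
    rw [inner_act_act_conjTranspose_of_anticomm hab hvacφ, hnorm]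
  obtain ⟨hSφΨ₀, hSφΨ₁⟩ := inner_smul_add_inner_smul_eq_of_biorthogonal hnorm h₀₁ h₁₀ h₁₁
  obtain ⟨hSΨφ₀, hSΨφ₁⟩ := inner_smul_add_inner_smul_eq_of_biorthogonal (inner_eq_one_symm hnorm)
    (inner_eq_zero_symm.1 h₁₀) (inner_eq_zero_symm.1 h₀₁) (inner_eq_one_symm h₁₁)
  rw [hSφ, hSφ, hSΨ, hSΨ]
  exact ⟨hSφΨ₀, hSφΨ₁, hSΨφ₀, hSΨφ₁⟩

/-- `S_φ Ψₙ = φₙ` and `S_Ψ φₙ = Ψₙ` for `n = 0, 1`. -/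
theorem stmt6 (a b Sφ SΨ : Matrix (Fin 2) (Fin 2) ℂ)
    (hab : a * b + b * a = 1) (ha2 : a * a = 0) (hb2 : b * b = 0)
    (φ₀ Ψ₀ : EuclideanSpace ℂ (Fin 2))
    (hvacφ : act a φ₀ = 0) (hvacΨ : act bᴴ Ψ₀ = 0)
    (hnorm : ⟪φ₀, Ψ₀⟫_ℂ = 1)
    (hSφ : ∀ f, act Sφ f = ⟪φ₀, f⟫_ℂ • φ₀ + ⟪act b φ₀, f⟫_ℂ • act b φ₀)
    (hSΨ : ∀ f, act SΨ f = ⟪Ψ₀, f⟫_ℂ • Ψ₀ + ⟪act aᴴ Ψ₀, f⟫_ℂ • act aᴴ Ψ₀) :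
    act Sφ Ψ₀ = φ₀ ∧ act Sφ (act aᴴ Ψ₀) = act b φ₀ ∧
    act SΨ φ₀ = Ψ₀ ∧ act SΨ (act b φ₀) = act aᴴ Ψ₀ :=
  stmt6_general a b Sφ SΨ hab φ₀ Ψ₀ hvacφ hvacΨ hnorm hSφ hSΨ
end
end
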